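/- Let X be a finite set and let A, B be non-empty subsets of X that are incompatible with each other. A non-empty subset C of X is compatible with both A and B if and only if one of the following five assertions holds: (i) C ∩ (A ∪ B) = ∅; (ii) A ∪ B ⊆ C; (iii) C ⊆ A ∩ B; (iv) C ⊆ A − B; (v) C ⊆ B − A. In particular, if C is compatible with both A and B, then C is also compatible with each of the five sets A ∪ B, A ∩ B, A − B, B − A, and (A − B) ∪ (B − A). -/

import Mathlib

/-!
Compatibility of `C` with `S` means that `C` is disjoint from `S`, contained in `S`, or
contains `S`. Incompatible `A`, `B` overlap and are not nested, and this rules out four of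
the nine ways `C` can relate to both: each of them would make `A`, `B` disjoint or nested.
The remaining five are the listed ones. In each of them `C` lies outside `A ∪ B`, around
`A ∪ B`, or inside one of the atoms `A ∩ B`, `A \ B`, `B \ A`; the five derived sets are
unions of atoms, so `C` is compatible with them.
-/

/-- Two subsets `A`, `B` are compatible if `A ∩ B ∈ {∅, A, B}`. -/
def Compatible {α : Type*} [DecidableEq α] (A B : Finset α) : Prop :=
  A ∩ B = ∅ ∨ A ∩ B = A ∨ A ∩ B = B

namespace Compatible

open scoped symmDiff

variable {α : Type*} [DecidableEq α] {A B C S : Finset α}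

theorem iff_disjoint_or_subset_or_superset :
    Compatible C S ↔ Disjoint C S ∨ C ⊆ S ∨ S ⊆ C := by
  rw [Compatible, Finset.inter_eq_left, Finset.inter_eq_right,
    Finset.disjoint_iff_inter_eq_empty]

theorem of_disjoint (h : Disjoint C S) : Compatible C S :=
  iff_disjoint_or_subset_or_superset.2 (Or.inl h)

theorem of_subset (h : C ⊆ S) : Compatible C S :=
  iff_disjoint_or_subset_or_superset.2 (Or.inr (Or.inl h))

theorem of_superset (h : S ⊆ C) : Compatible C S :=
  iff_disjoint_or_subset_or_superset.2 (Or.inr (Or.inr h))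

theorem not_iff : ¬Compatible A B ↔ ¬Disjoint A B ∧ ¬A ⊆ B ∧ ¬B ⊆ A := by
  rw [iff_disjoint_or_subset_or_superset]
  tauto

theorem and_iff_of_not_compatible (hAB : ¬Compatible A B) :
    (Compatible C A ∧ Compatible C B) ↔
      (C ∩ (A ∪ B) = ∅ ∨ A ∪ B ⊆ C ∨ C ⊆ A ∩ B ∨ C ⊆ A \ B ∨ C ⊆ B \ A) := by
  obtain ⟨hAB_meet, hAB_notSub, hBA_notSub⟩ := not_iff.1 hAB
  rw [iff_disjoint_or_subset_or_superset, iff_disjoint_or_subset_or_superset,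
    ← Finset.disjoint_iff_inter_eq_empty, Finset.disjoint_union_right, Finset.union_subset_iff,
    Finset.subset_inter_iff, Finset.subset_sdiff, Finset.subset_sdiff]
  constructor
  · rintro ⟨hCA | hCA | hAC, hCB | hCB | hBC⟩
    · exact Or.inl ⟨hCA, hCB⟩
    · exact Or.inr <| Or.inr <| Or.inr <| Or.inr ⟨hCB, hCA⟩
    · exact absurd (hCA.mono_left hBC).symm hAB_meet
    · exact Or.inr <| Or.inr <| Or.inr <| Or.inl ⟨hCA, hCB⟩
    · exact Or.inr <| Or.inr <| Or.inl ⟨hCA, hCB⟩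
    · exact absurd (hBC.trans hCA) hBA_notSub
    · exact absurd (hCB.mono_left hAC) hAB_meet
    · exact absurd (hAC.trans hCB) hAB_notSub
    · exact Or.inr <| Or.inl ⟨hAC, hBC⟩
  · rintro (⟨hCA, hCB⟩ | ⟨hAC, hBC⟩ | ⟨hCA, hCB⟩ | ⟨hCA, hCB⟩ | ⟨hCB, hCA⟩)
    · exact ⟨Or.inl hCA, Or.inl hCB⟩
    · exact ⟨Or.inr (Or.inr hAC), Or.inr (Or.inr hBC)⟩
    · exact ⟨Or.inr (Or.inl hCA), Or.inr (Or.inl hCB)⟩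
    · exact ⟨Or.inr (Or.inl hCA), Or.inl hCB⟩
    · exact ⟨Or.inl hCA, Or.inr (Or.inl hCB)⟩

theorem union_inter_sdiff_symmDiff_of_cases
    (h : C ∩ (A ∪ B) = ∅ ∨ A ∪ B ⊆ C ∨ C ⊆ A ∩ B ∨ C ⊆ A \ B ∨ C ⊆ B \ A) :
    Compatible C (A ∪ B) ∧ Compatible C (A ∩ B) ∧ Compatible C (A \ B) ∧
      Compatible C (B \ A) ∧ Compatible C (A ∆ B) := by
  have hAB : A \ B ⊆ A ∪ B := sdiff_le.trans le_sup_left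
  have hBA : B \ A ⊆ A ∪ B := sdiff_le.trans le_sup_right
  rcases h with hC | hC | hC | hC | hC
  · have hC : Disjoint C (A ∪ B) := Finset.disjoint_iff_inter_eq_empty.2 hC
    exact ⟨.of_disjoint hC, .of_disjoint (hC.mono_right Finset.inter_subset_union),
      .of_disjoint (hC.mono_right hAB), .of_disjoint (hC.mono_right hBA),
      .of_disjoint (hC.mono_right symmDiff_le_sup)⟩
  · exact ⟨.of_superset hC, .of_superset (Finset.inter_subset_union.trans hC),
      .of_superset (hAB.trans hC), .of_superset (hBA.trans hC),
      .of_superset (symmDiff_le_sup.trans hC)⟩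
  · have hC' : Disjoint C (A ∆ B) := (disjoint_symmDiff_inf A B).symm.mono_left hC
    exact ⟨.of_subset (hC.trans Finset.inter_subset_union), .of_subset hC,
      .of_disjoint (hC'.mono_right le_sup_left), .of_disjoint (hC'.mono_right le_sup_right),
      .of_disjoint hC'⟩
  · exact ⟨.of_subset (hC.trans hAB),
      .of_disjoint ((Finset.disjoint_sdiff_inter A B).mono_left hC),
      .of_subset hC, .of_disjoint (disjoint_sdiff_sdiff.mono_left hC),
      .of_subset (hC.trans le_sup_left)⟩
  · exact ⟨.of_subset (hC.trans hBA),
      .of_disjoint ((Finset.disjoint_sdiff_inter B A).mono hC (Finset.inter_comm A B).le),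
      .of_disjoint (disjoint_sdiff_sdiff.symm.mono_left hC), .of_subset hC,
      .of_subset (hC.trans le_sup_right)⟩

end Compatible

theorem stmt6_general {α : Type*} [DecidableEq α] (A B C : Finset α)
    (hAB : ¬Compatible A B) :
    ((Compatible C A ∧ Compatible C B) ↔
      (C ∩ (A ∪ B) = ∅ ∨ A ∪ B ⊆ C ∨ C ⊆ A ∩ B ∨ C ⊆ A \ B ∨ C ⊆ B \ A)) ∧
    ((Compatible C A ∧ Compatible C B) →
      Compatible C (A ∪ B) ∧ Compatible C (A ∩ B) ∧ Compatible C (A \ B) ∧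
        Compatible C (B \ A) ∧ Compatible C ((A \ B) ∪ (B \ A))) := by
  have hcases := Compatible.and_iff_of_not_compatible (C := C) hAB
  -- `A ∆ B` is `A \ B ⊔ B \ A` by definition, which closes the last conjunct
  exact ⟨hcases, fun h => Compatible.union_inter_sdiff_symmDiff_of_cases (hcases.1 h)⟩

/-- For incompatible non-empty `A`, `B`, a non-empty `C` is compatible with both `A`
and `B` iff one of five assertions holds; in particular such a `C` is compatible with
`A ∪ B`, `A ∩ B`, `A - B`, `B - A` and `(A - B) ∪ (B - A)`. -/
theorem stmt6 {α : Type*} [Fintype α] [DecidableEq α] (A B C : Finset α)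
    (hA : A.Nonempty) (hB : B.Nonempty) (hC : C.Nonempty)
    (hAB : ¬Compatible A B) :
    ((Compatible C A ∧ Compatible C B) ↔
      (C ∩ (A ∪ B) = ∅ ∨ A ∪ B ⊆ C ∨ C ⊆ A ∩ B ∨ C ⊆ A \ B ∨ C ⊆ B \ A)) ∧
    ((Compatible C A ∧ Compatible C B) →
      Compatible C (A ∪ B) ∧ Compatible C (A ∩ B) ∧ Compatible C (A \ B) ∧
        Compatible C (B \ A) ∧ Compatible C ((A \ B) ∪ (B \ A))) :=
  stmt6_general A B C hAB
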